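/- arXiv:2112.05460 — 4 statements merged into one kernel-verified Lean document; each statement's English description precedes it below -/
import Mathlib

section
/- Let M be an n×n complex matrix and k ∈ {1, ..., n}. Then the (n−k)-th derivative of the characteristic polynomial of M equals (n−k)! times the sum, over all subsets α of {1,...,n} of size k, of the characteristic polynomials of the principal submatrices M[α]. -/
/-!
Compare coefficients. By `Matrix.charpoly_coeff_eq_sum_minors`, the coefficient of `X ^ (n - r)`
in the characteristic polynomial of an `n × n` matrix is `(-1) ^ r` times the sum of its `r × r`
principal minors, and the principal minors of `M[α]` are the principal minors of `M` indexed by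
subsets of `α`. Each `r`-subset of `{1, …, n}` lies in `(n - r).choose (k - r)` of the `k`-subsets,
which together with `(m + d).descFactorial d = d ! * (m + d).choose d` matches the coefficients
on both sides.
-/

open Polynomial Matrix Finset

lemma Finset.sum_powersetCard_sum_powersetCard {α M : Type*} [DecidableEq α] [AddCommMonoid M]
    (U : Finset α) {r k : ℕ} (hrk : r ≤ k) (g : Finset α → M) :
    ∑ s ∈ U.powersetCard k, ∑ t ∈ s.powersetCard r, g t =
      (#U - r).choose (k - r) • ∑ t ∈ U.powersetCard r, g t := by
  rw [sum_comm' (t' := U.powersetCard r) (s' := fun t => (U.powersetCard k).filter (t ⊆ ·)),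
    smul_sum]
  · refine sum_congr rfl fun t ht => ?_
    obtain ⟨htU, rfl⟩ := mem_powersetCard.mp ht
    rw [sum_const, card_filter_powersetCard_subset t U k htU hrk]
  · intro s t
    simp only [mem_powersetCard, mem_filter]
    constructor
    · rintro ⟨⟨hsU, rfl⟩, hts, rfl⟩
      exact ⟨⟨⟨hsU, rfl⟩, hts⟩, hts.trans hsU, rfl⟩
    · rintro ⟨⟨⟨hsU, rfl⟩, hts⟩, -, rfl⟩
      exact ⟨⟨hsU, rfl⟩, hts, rfl⟩

namespace Matrix

lemma det_submatrix_map_embedding {ι κ R : Type*} [DecidableEq ι] [DecidableEq κ] [CommRing R]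
    (M : Matrix ι ι R) (f : κ ↪ ι) (u : Finset κ) :
    (M.submatrix (f ∘ Subtype.val : u → ι) (f ∘ Subtype.val)).det =
      (M.submatrix (Subtype.val : u.map f → ι) Subtype.val).det := by
  rw [← det_submatrix_equiv_self (equivMap f u), submatrix_submatrix]
  rfl

variable {ι R : Type*} [DecidableEq ι] [CommRing R]

lemma coeff_charpoly_submatrix (M : Matrix ι ι R) (s : Finset ι) {r : ℕ} (hr : r ≤ #s) :
    (M.submatrix (Subtype.val : s → ι) Subtype.val).charpoly.coeff (#s - r) =
      (-1) ^ r * ∑ t ∈ s.powersetCard r, (M.submatrix (Subtype.val : t → ι) Subtype.val).det := by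
  rw [← Fintype.card_coe s, charpoly_coeff_eq_sum_minors _ _ (by simpa using hr)]
  congr 1
  conv_rhs => rw [← s.attach_map_val, powersetCard_map, sum_map, ← univ_eq_attach]
  refine sum_congr rfl fun u _ => ?_
  rw [submatrix_submatrix]
  exact det_submatrix_map_embedding M (Function.Embedding.subtype (· ∈ s)) u

theorem iterate_derivative_charpoly [Fintype ι] (M : Matrix ι ι R) {k : ℕ}
    (hk : k ≤ Fintype.card ι) :
    derivative^[Fintype.card ι - k] M.charpoly =
      (Fintype.card ι - k).factorial •
        ∑ s ∈ univ.powersetCard k, (M.submatrix (Subtype.val : s → ι) Subtype.val).charpoly := by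
  nontriviality R
  set d := Fintype.card ι - k
  ext j
  rw [coeff_iterate_derivative, coeff_smul, finsetSum_coeff]
  obtain hjk | hkj := le_or_gt j k
  · obtain ⟨r, rfl⟩ := Nat.exists_eq_add_of_le hjk
    have hN : j + d = Fintype.card ι - r := by omega
    have hsub : ∀ s ∈ univ.powersetCard (j + r),
        (M.submatrix (Subtype.val : s → ι) Subtype.val).charpoly.coeff j =
          (-1) ^ r *
            ∑ t ∈ s.powersetCard r, (M.submatrix (Subtype.val : t → ι) Subtype.val).det := by
      intro s hs
      have hs : #s = j + r := (mem_powersetCard.mp hs).2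
      rw [← coeff_charpoly_submatrix M s (by omega), hs, Nat.add_sub_cancel]
    rw [sum_congr rfl hsub, ← mul_sum, sum_powersetCard_sum_powersetCard _ (Nat.le_add_left r j),
      hN, charpoly_coeff_eq_sum_minors M r (by omega), card_univ, ← hN, Nat.add_sub_cancel,
      Nat.descFactorial_eq_factorial_mul_choose, Nat.choose_symm_add, mul_smul, mul_smul_comm]
  · have hsub : ∀ s ∈ univ.powersetCard k,
        (M.submatrix (Subtype.val : s → ι) Subtype.val).charpoly.coeff j = 0 := by
      intro s hs
      apply coeff_eq_zero_of_natDegree_lt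
      simpa [(mem_powersetCard.mp hs).2] using hkj
    have hM : M.charpoly.natDegree < j + d := by rw [charpoly_natDegree_eq_dim]; omega
    rw [sum_eq_zero hsub, coeff_eq_zero_of_natDegree_lt hM, smul_zero, smul_zero]

end Matrix

theorem stmt_4_general (n k : ℕ) (hkn : k ≤ n)
    (M : Matrix (Fin n) (Fin n) ℂ) :
    derivative^[n - k] M.charpoly =
      (n - k).factorial •
        ∑ s : {s : Finset (Fin n) // s.card = k},
          (M.submatrix (fun i => ((s.1.orderIsoOfFin s.2 i : Fin n)))
            (fun i => ((s.1.orderIsoOfFin s.2 i : Fin n)))).charpoly := by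
  have hsummand (s : {s : Finset (Fin n) // s.card = k}) :
      (M.submatrix (fun i => ((s.1.orderIsoOfFin s.2 i : Fin n)))
        (fun i => ((s.1.orderIsoOfFin s.2 i : Fin n)))).charpoly =
      (M.submatrix (Subtype.val : s.1 → Fin n) Subtype.val).charpoly := by
    rw [← charpoly_reindex (s.1.orderIsoOfFin s.2).toEquiv.symm, reindex_apply, Equiv.symm_symm,
      submatrix_submatrix]
    rfl
  have h := M.iterate_derivative_charpoly (k := k) (by rwa [Fintype.card_fin])
  rw [Fintype.card_fin, sum_subtype _ fun s => mem_powersetCard_univ] at h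
  rw [h]
  exact congrArg _ (sum_congr rfl fun s _ => (hsummand s).symm)

theorem stmt_4 (n k : ℕ) (hk1 : 1 ≤ k) (hkn : k ≤ n)
    (M : Matrix (Fin n) (Fin n) ℂ) :
    derivative^[n - k] M.charpoly =
      (n - k).factorial •
        ∑ s : {s : Finset (Fin n) // s.card = k},
          (M.submatrix (fun i => ((s.1.orderIsoOfFin s.2 i : Fin n)))
            (fun i => ((s.1.orderIsoOfFin s.2 i : Fin n)))).charpoly :=
  stmt_4_general n k hkn M
end

section
/- Let M be an n×n complex matrix that is k-spectrally monomorphic (1 ≤ k ≤ n), and let Q be the common characteristic polynomial of its k×k principal submatrices. Then the (n−k)-th derivative of the characteristic polynomial of M equals (n!/k!)·Q. -/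
open Polynomial Matrix

/-- `M` is `k`-spectrally monomorphic: all `k × k` principal submatrices of `M`
have the same characteristic polynomial. -/
def SpecMono {n : ℕ} (k : ℕ) (M : Matrix (Fin n) (Fin n) ℂ) : Prop :=
  ∀ f g : Fin k → Fin n, Function.Injective f → Function.Injective g →
    (M.submatrix f f).charpoly = (M.submatrix g g).charpoly

/-! Differentiating `det (X - M)` column by column turns column `i` into the unit vector `eᵢ`,
and expanding along that column leaves the characteristic polynomial of the principal submatrix
obtained by deleting row and column `i`. Hence `P' = ∑ᵢ χ(M without i)`. If every `k × k`
principal submatrix has characteristic polynomial `Q`, so do all `k × k` principal submatrices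
of each of the `n` deleted matrices, and induction on `n ≥ k` gives
`P^{(n-k)} = n • ((n-1)! / k! • Q) = n! / k! • Q`. -/

variable {R : Type*} [CommRing R]

namespace Matrix

theorem derivative_det {n : Type*} [Fintype n] [DecidableEq n] (A : Matrix n n R[X]) :
    derivative A.det = ∑ i, (A.updateCol i fun j => derivative (A j i)).det := by
  simp only [det_apply, derivative_sum, derivative_smul, derivative_prod_finset, Finset.smul_sum]
  rw [Finset.sum_comm]
  refine Finset.sum_congr rfl fun i _ => Finset.sum_congr rfl fun σ _ => ?_
  rw [← Finset.prod_erase_mul _ _ (Finset.mem_univ i), updateCol_self]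
  congr 2
  refine Finset.prod_congr rfl fun j hj => ?_
  rw [updateCol_ne (Finset.ne_of_mem_erase hj)]

theorem det_updateCol_single_self {m : ℕ} (A : Matrix (Fin (m + 1)) (Fin (m + 1)) R)
    (i : Fin (m + 1)) :
    (A.updateCol i (Pi.single i 1)).det = (A.submatrix i.succAbove i.succAbove).det := by
  rw [det_succ_column _ i, Finset.sum_eq_single i]
  · simp [submatrix_updateCol_succAbove, ← two_mul, pow_mul]
  · intro j _ hj
    simp [Pi.single_eq_of_ne hj]
  · simp

theorem charmatrix_submatrix {m n : Type*} [Fintype m] [Fintype n] [DecidableEq m]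
    [DecidableEq n] (M : Matrix n n R) {f : m → n} (hf : Function.Injective f) :
    charmatrix (M.submatrix f f) = (charmatrix M).submatrix f f := by
  ext a b
  by_cases hab : a = b
  · subst hab
    simp [charmatrix_apply_eq]
  · rw [charmatrix_apply_ne _ _ _ hab, submatrix_apply, submatrix_apply,
      charmatrix_apply_ne _ _ _ (hf.ne hab)]

theorem derivative_charpoly {m : ℕ} (M : Matrix (Fin (m + 1)) (Fin (m + 1)) R) :
    derivative M.charpoly = ∑ i : Fin (m + 1), (M.submatrix i.succAbove i.succAbove).charpoly := by
  have hcol : ∀ i, (fun j => derivative (charmatrix M j i)) = Pi.single i 1 := by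
    intro i
    ext1 j
    by_cases hji : j = i
    · subst hji
      simp [charmatrix_apply_eq]
    · simp [charmatrix_apply_ne _ _ _ hji, Pi.single_eq_of_ne hji]
  simp only [charpoly, derivative_det, hcol, det_updateCol_single_self]
  exact Finset.sum_congr rfl fun i _ => by
    rw [charmatrix_submatrix _ Fin.succAbove_right_injective]

theorem iterate_derivative_charpoly_eq_smul {k m : ℕ} (hkm : k ≤ m)
    (M : Matrix (Fin m) (Fin m) R) (Q : R[X])
    (hQ : ∀ f : Fin k → Fin m, Function.Injective f → (M.submatrix f f).charpoly = Q) :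
    derivative^[m - k] M.charpoly = (m.factorial / k.factorial) • Q := by
  induction m, hkm using Nat.le_induction with
  | base =>
    rw [Nat.sub_self, Function.iterate_zero_apply, Nat.div_self k.factorial_pos, one_smul,
      ← hQ id Function.injective_id, submatrix_id_id]
  | succ m hkm ih =>
    have hdel : ∀ i : Fin (m + 1), derivative^[m - k]
        (M.submatrix i.succAbove i.succAbove).charpoly = (m.factorial / k.factorial) • Q :=
      fun i => ih _ fun f hf => by
        rw [submatrix_submatrix]
        exact hQ _ (Fin.succAbove_right_injective.comp hf)
    rw [Nat.succ_sub hkm, Function.iterate_succ_apply, derivative_charpoly,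
      iterate_derivative_sum, Finset.sum_congr rfl fun i _ => hdel i, Finset.sum_const,
      Finset.card_univ, Fintype.card_fin, smul_smul, Nat.factorial_succ,
      Nat.mul_div_assoc _ (Nat.factorial_dvd_factorial hkm)]

end Matrix

theorem stmt_5_general (n k : ℕ) (hkn : k ≤ n)
    (M : Matrix (Fin n) (Fin n) ℂ) (Q : Polynomial ℂ)
    (hQ : ∀ f : Fin k → Fin n, Function.Injective f → (M.submatrix f f).charpoly = Q) :
    derivative^[n - k] M.charpoly = (n.factorial / k.factorial) • Q :=
  iterate_derivative_charpoly_eq_smul hkn M Q hQ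

theorem stmt_5 (n k : ℕ) (hk1 : 1 ≤ k) (hkn : k ≤ n)
    (M : Matrix (Fin n) (Fin n) ℂ) (Q : Polynomial ℂ)
    (hQ : ∀ f : Fin k → Fin n, Function.Injective f → (M.submatrix f f).charpoly = Q) :
    derivative^[n - k] M.charpoly = (n.factorial / k.factorial) • Q :=
  stmt_5_general n k hkn M Q hQ
end

section
/- Let M be an n×n complex matrix that is k-spectrally monomorphic. Then M is l-spectrally monomorphic for every l ∈ {1, ..., min(k, n−k)}. -/
/-!
Up to sign, the coefficient of `X ^ (l - j)` in the characteristic polynomial of an `l × l`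
principal submatrix is the sum of its `j × j` principal minors. So `k`-spectral monomorphy says
that, for each `j ≤ k`, the sum of the `j × j` principal minors indexed by subsets of a
`k`-set `K` does not depend on `K`. For `j ≤ k ≤ n - j` this forces all `j × j` principal
minors to be equal (the inclusion matrix of `j`-sets against `k`-sets has full rank, as in
Gottlieb–Kantor): by induction on `j`, two `j`-sets differing in one element are compared
through the difference of their minors, whose sums over the smaller sets vanish. Taking `j ≤ l`
gives equal characteristic polynomials for all `l × l` principal submatrices.
-/

open Polynomial Matrix

open Finset

namespace Finset

variable {α V : Type*}

def ConstOnPowersetCard (q : Finset α → V) (G : Finset α) (m : ℕ) : Prop :=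
  ∀ S ∈ G.powersetCard m, ∀ T ∈ G.powersetCard m, q S = q T

theorem constOnPowersetCard_succ_of_insert_eq [DecidableEq α] {q : Finset α → V} {G : Finset α}
    {m : ℕ}
    (h : ∀ U ∈ G.powersetCard m, ∀ a ∈ G \ U, ∀ b ∈ G \ U, q (insert a U) = q (insert b U)) :
    ConstOnPowersetCard q G (m + 1) := by
  intro S hS T hT
  rw [mem_powersetCard] at hS hT
  induction hd : #(S \ T) generalizing S with
  | zero =>
    rw [card_eq_zero, sdiff_eq_empty_iff_subset] at hd
    rw [eq_of_subset_of_card_le hd (hT.2.trans hS.2.symm).le]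
  | succ d ih =>
    obtain ⟨a, haST⟩ : (S \ T).Nonempty := card_pos.1 (hd ▸ d.succ_pos)
    obtain ⟨haS, haT⟩ := mem_sdiff.1 haST
    obtain ⟨b, hbT, hbS⟩ : ∃ b ∈ T, b ∉ S := not_subset.1 fun hTS =>
      haT (eq_of_subset_of_card_le hTS (hS.2.trans hT.2.symm).le ▸ haS)
    have hbS' : b ∉ S.erase a := fun hb => hbS (mem_of_mem_erase hb)
    have hswap : q S = q (insert b (S.erase a)) := by
      conv_lhs => rw [← insert_erase haS]
      refine h _ (mem_powersetCard.2 ⟨(erase_subset a S).trans hS.1, ?_⟩) a ?_ b ?_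
      · rw [card_erase_of_mem haS, hS.2, Nat.add_sub_cancel]
      · exact mem_sdiff.2 ⟨hS.1 haS, notMem_erase a S⟩
      · exact mem_sdiff.2 ⟨hT.1 hbT, hbS'⟩
    rw [hswap]
    refine ih _ ⟨insert_subset (hT.1 hbT) ((erase_subset a S).trans hS.1), ?_⟩ ?_
    · rw [card_insert_of_notMem hbS', card_erase_of_mem haS, hS.2, Nat.add_sub_cancel]
    · have : insert b (S.erase a) \ T = (S \ T).erase a := by
        ext x
        by_cases hxb : x = b
        · simp [hxb, hbT]
        · simp only [mem_sdiff, mem_insert, mem_erase, hxb, false_or]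
          tauto
      rw [this, card_erase_of_mem haST, hd, Nat.add_sub_cancel]

variable [AddCommGroup V]

namespace ConstOnPowersetCard

variable {q : Finset α → V} {G : Finset α} {m : ℕ}

theorem sum_powersetCard_eq (hq : ConstOnPowersetCard q G m) {W U : Finset α} (hW : W ⊆ G)
    (hU : U ∈ G.powersetCard m) :
    ∑ L ∈ W.powersetCard m, q L = (#W).choose m • q U := by
  rw [← card_powersetCard, ← sum_const]
  exact sum_congr rfl fun L hL => hq L (powersetCard_mono hW hL) U hU

theorem eq_zero_of_sum_eq_zero [IsAddTorsionFree V] (hq : ConstOnPowersetCard q G m)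
    {W U : Finset α} (hW : W ⊆ G) (hmW : m ≤ #W) (hsum : ∑ L ∈ W.powersetCard m, q L = 0)
    (hU : U ∈ G.powersetCard m) : q U = 0 := by
  rw [hq.sum_powersetCard_eq hW hU] at hsum
  exact (nsmul_eq_zero_iff_right (Nat.choose_pos hmW).ne').1 hsum

end ConstOnPowersetCard

variable [DecidableEq α]

theorem sum_powersetCard_succ_insert {q : Finset α → V} {W : Finset α} {a : α} (ha : a ∉ W)
    (m : ℕ) :
    ∑ L ∈ (insert a W).powersetCard (m + 1), q L =
      ∑ L ∈ W.powersetCard (m + 1), q L + ∑ L ∈ W.powersetCard m, q (insert a L) := by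
  rw [powersetCard_succ_insert ha, sum_union, sum_image]
  · intro L hL L' hL' h
    rw [← erase_insert (fun h' => ha ((mem_powersetCard.1 hL).1 h')),
      ← erase_insert (fun h' => ha ((mem_powersetCard.1 hL').1 h')), h]
  · rw [disjoint_left]
    intro X hX hX'
    obtain ⟨L, -, rfl⟩ := mem_image.1 hX'
    exact ha ((mem_powersetCard.1 hX).1 (mem_insert_self a L))

theorem ConstOnPowersetCard.of_sum_powersetCard [IsAddTorsionFree V] {q : Finset α → V}
    {G : Finset α} {m j : ℕ} (hmj : m ≤ j) (hjG : j + m ≤ #G)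
    (h : ConstOnPowersetCard (fun W => ∑ L ∈ W.powersetCard m, q L) G j) :
    ConstOnPowersetCard q G m := by
  induction m generalizing j G q with
  | zero =>
    intro S hS T hT
    rw [card_eq_zero.1 (mem_powersetCard.1 hS).2, card_eq_zero.1 (mem_powersetCard.1 hT).2]
  | succ m ih =>
    refine constOnPowersetCard_succ_of_insert_eq fun U hU a ha b hb => ?_
    obtain ⟨haG, haU⟩ := mem_sdiff.1 ha
    obtain ⟨hbG, hbU⟩ := mem_sdiff.1 hb
    set G' := G \ {a, b}
    -- `D` has zero sums over every `(j - 1)`-subset of `G'`, so by induction it vanishes on `U`.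
    set D : Finset α → V := fun L => q (insert a L) - q (insert b L)
    have hsumD : ∀ W ∈ G'.powersetCard (j - 1), ∑ L ∈ W.powersetCard m, D L = 0 := by
      intro W hW
      obtain ⟨hWG', hWj⟩ := mem_powersetCard.1 hW
      have hnotMem : ∀ c ∈ ({a, b} : Finset α), c ∉ W := fun c hc hcW =>
        (mem_sdiff.1 (hWG' hcW)).2 hc
      have hinsert : ∀ c ∈ ({a, b} : Finset α), c ∈ G → insert c W ∈ G.powersetCard j :=
        fun c hc hcG => mem_powersetCard.2 ⟨insert_subset hcG (hWG'.trans sdiff_subset), by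
          rw [card_insert_of_notMem (hnotMem c hc), hWj]; omega⟩
      have hab := h _ (hinsert a (by simp) haG) _ (hinsert b (by simp) hbG)
      simp only [sum_powersetCard_succ_insert (hnotMem a (by simp)),
        sum_powersetCard_succ_insert (hnotMem b (by simp)), add_right_inj] at hab
      simp only [D, sum_sub_distrib, hab, sub_self]
    have hG' : j - 1 + m ≤ #G' := by
      have hcard : #G - #{a, b} ≤ #G' := le_card_sdiff _ _
      have := card_le_two (a := a) (b := b)
      omega
    have hD : ConstOnPowersetCard D G' m :=
      ih (by omega) hG' fun W hW W' hW' => by simp only [hsumD W hW, hsumD W' hW']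
    obtain ⟨W₀, hW₀⟩ := powersetCard_nonempty.2 (show j - 1 ≤ #G' by omega)
    have hUG' : U ∈ G'.powersetCard m := by
      obtain ⟨hUG, hUm⟩ := mem_powersetCard.1 hU
      refine mem_powersetCard.2 ⟨fun x hx => mem_sdiff.2 ⟨hUG hx, ?_⟩, hUm⟩
      rintro hx'
      rcases mem_insert.1 hx' with rfl | hxb
      · exact haU hx
      · exact hbU (mem_singleton.1 hxb ▸ hx)
    obtain ⟨hW₀G', hW₀j⟩ := mem_powersetCard.1 hW₀
    exact sub_eq_zero.1 <|
      hD.eq_zero_of_sum_eq_zero hW₀G' (by omega) (hsumD W₀ hW₀) hUG'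

end Finset

namespace Matrix

variable {ι κ R : Type*} [DecidableEq ι] [CommRing R]

def principalMinor (M : Matrix ι ι R) (s : Finset ι) : R :=
  (M.submatrix ((↑) : s → ι) (↑)).det

theorem principalMinor_submatrix [DecidableEq κ] (M : Matrix ι ι R) (f : κ ↪ ι)
    (s : Finset κ) :
    principalMinor (M.submatrix f f) s = principalMinor M (s.map f) := by
  rw [principalMinor, principalMinor, ← det_submatrix_equiv_self (equivMap f s)]
  rfl

theorem charpoly_submatrix_coeff [Fintype κ] [DecidableEq κ] (M : Matrix ι ι R) (f : κ ↪ ι)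
    {j : ℕ} (hj : j ≤ Fintype.card κ) :
    (M.submatrix f f).charpoly.coeff (Fintype.card κ - j) =
      (-1) ^ j * ∑ s ∈ (univ.map f).powersetCard j, principalMinor M s := by
  rw [charpoly_coeff_eq_sum_minors _ _ hj, powersetCard_map, sum_map]
  simp only [RelEmbedding.coe_toEmbedding, mapEmbedding_apply, ← principalMinor_submatrix]
  rfl

theorem charpoly_eq_of_coeff_card_sub_eq [Fintype κ] [DecidableEq κ] [Nontrivial R]
    {A B : Matrix κ κ R}
    (h : ∀ j ≤ Fintype.card κ, A.charpoly.coeff (Fintype.card κ - j) =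
      B.charpoly.coeff (Fintype.card κ - j)) :
    A.charpoly = B.charpoly := by
  ext i
  rcases le_or_gt i (Fintype.card κ) with hi | hi
  · simpa [Nat.sub_sub_self hi] using h _ (Nat.sub_le _ i)
  · rw [coeff_eq_zero_of_natDegree_lt (A.charpoly_natDegree_eq_dim ▸ hi),
      coeff_eq_zero_of_natDegree_lt (B.charpoly_natDegree_eq_dim ▸ hi)]

theorem charpoly_submatrix_eq_iff [Fintype κ] [DecidableEq κ] [Nontrivial R]
    (M : Matrix ι ι R) (f g : κ ↪ ι) :
    (M.submatrix f f).charpoly = (M.submatrix g g).charpoly ↔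
      ∀ j ≤ Fintype.card κ, ∑ s ∈ (univ.map f).powersetCard j, principalMinor M s =
        ∑ s ∈ (univ.map g).powersetCard j, principalMinor M s := by
  constructor
  · intro h j hj
    have := congrArg (coeff · (Fintype.card κ - j)) h
    simp only [charpoly_submatrix_coeff M _ hj] at this
    exact ((isUnit_neg_one.pow j).mul_right_inj).1 this
  · intro h
    refine charpoly_eq_of_coeff_card_sub_eq fun j hj => ?_
    rw [charpoly_submatrix_coeff M f hj, charpoly_submatrix_coeff M g hj, h j hj]

end Matrix

theorem stmt_6 (n k : ℕ) (M : Matrix (Fin n) (Fin n) ℂ) (hM : SpecMono k M)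
    (l : ℕ) (hl1 : 1 ≤ l) (hl : l ≤ min k (n - k)) :
    SpecMono l M := by
  have hminorSum : ∀ j ≤ k, ConstOnPowersetCard
      (fun K => ∑ s ∈ K.powersetCard j, principalMinor M s) univ k := by
    intro j hj K hK K' hK'
    rw [mem_powersetCard] at hK hK'
    let f := (K.orderEmbOfFin hK.2).toEmbedding
    let f' := (K'.orderEmbOfFin hK'.2).toEmbedding
    simpa [f, f'] using (charpoly_submatrix_eq_iff M f f').1
      (hM f f' f.injective f'.injective) j (by simpa using hj)
  have hminor : ∀ j ≤ l, ConstOnPowersetCard (principalMinor M) univ j := fun j hj =>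
    .of_sum_powersetCard (j := k) (by omega) (by simp; omega) (hminorSum j (by omega))
  intro f g hf hg
  refine (charpoly_submatrix_eq_iff M ⟨f, hf⟩ ⟨g, hg⟩).2 fun j hj => ?_
  rw [Fintype.card_fin] at hj
  obtain ⟨U, hU⟩ := powersetCard_nonempty.2 (show j ≤ #(univ : Finset (Fin n)) by simp; omega)
  rw [(hminor j hj).sum_powersetCard_eq (subset_univ _) hU,
    (hminor j hj).sum_powersetCard_eq (subset_univ _) hU, card_map, card_map]
end

section
/- Let M be an n×n complex matrix, k ∈ {3, ..., n−1}, and p ≤ k. If M is k-spectrally monomorphic, then for every subset β ⊆ {1,...,n} with |β| ≤ n−k, the sum of det M[α] over all subsets α of {1,...,n} with α ⊇ β and |α| = p depends only on the cardinality of β; that is, if β and β' are two subsets of size at most n−k with |β| = |β'|, then Σ_{α ⊇ β, |α|=p} det M[α] = Σ_{α ⊇ β', |α|=p} det M[α]. -/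
open Polynomial Matrix

/-- The determinant of the principal submatrix `M[α]` of `M` whose rows and columns
are indexed by the subset `α`. -/
def principalDet {n : ℕ} (M : Matrix (Fin n) (Fin n) ℂ) (α : Finset (Fin n)) : ℂ :=
  (M.submatrix (fun i : {x // x ∈ α} => (i : Fin n))
    (fun i : {x // x ∈ α} => (i : Fin n))).det

/-!
The sum `U S` of the `p × p` principal minors of `M` inside a set `S` is, up to sign, a
coefficient of the characteristic polynomial of `M[S]`, so spectral monomorphism makes it
constant on `k`-sets. Double counting `∑_{K ⊆ S, |K| = k} U K = C(|S| - p, k - p) • U S` then shows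
that `U S` depends only on `|S|` once `|S| ≥ k`. Finally, inclusion–exclusion writes the sum over
`α ⊇ β` as `∑_{δ ⊆ β} (-1)^|δ| U δᶜ`, and `|δᶜ| ≥ k` because `|β| ≤ n - k`.
-/

open Finset

namespace Finset

variable {ι R : Type*}

lemma sum_powerset_eq_of_card_eq [AddCommMonoid R] (F : Finset ι → R) {m : ℕ}
    (hF : ∀ δ δ' : Finset ι, #δ = #δ' → #δ ≤ m → F δ = F δ')
    {β β' : Finset ι} (hβ : #β ≤ m) (hββ' : #β = #β') :
    ∑ δ ∈ β.powerset, F δ = ∑ δ ∈ β'.powerset, F δ := by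
  rw [sum_powerset, sum_powerset, ← hββ']
  refine sum_congr rfl fun j hj => ?_
  have hjβ : j ≤ #β := Nat.lt_succ_iff.1 (mem_range.1 hj)
  obtain ⟨δ₀, -, hδ₀⟩ := exists_subset_card_eq hjβ
  have hconst : ∀ γ : Finset ι, ∀ δ ∈ γ.powersetCard j, F δ = F δ₀ := fun γ δ hδ => by
    have hδ : #δ = j := (mem_powersetCard.1 hδ).2
    exact hF δ δ₀ (hδ.trans hδ₀.symm) (hδ ▸ hjβ.trans hβ)
  rw [sum_eq_card_nsmul (hconst β), sum_eq_card_nsmul (hconst β'), card_powersetCard,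
    card_powersetCard, hββ']

variable [DecidableEq ι]

lemma sum_powersetCard_sum_powersetCard_s7 [AddCommMonoid R] (g : Finset ι → R) {p k : ℕ}
    (hpk : p ≤ k) (S : Finset ι) :
    ∑ K ∈ S.powersetCard k, ∑ α ∈ K.powersetCard p, g α =
      (#S - p).choose (k - p) • ∑ α ∈ S.powersetCard p, g α := by
  calc ∑ K ∈ S.powersetCard k, ∑ α ∈ K.powersetCard p, g α
      = ∑ α ∈ S.powersetCard p, ∑ K ∈ S.powersetCard k with α ⊆ K, g α := by
        refine sum_comm' fun K α => ?_
        simp only [mem_powersetCard, mem_filter]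
        constructor
        · rintro ⟨⟨hKS, hK⟩, hαK, hα⟩
          exact ⟨⟨⟨hKS, hK⟩, hαK⟩, hαK.trans hKS, hα⟩
        · rintro ⟨⟨⟨hKS, hK⟩, hαK⟩, -, hα⟩
          exact ⟨⟨hKS, hK⟩, hαK, hα⟩
    _ = ∑ α ∈ S.powersetCard p, (#S - p).choose (k - p) • g α := by
        refine sum_congr rfl fun α hα => ?_
        obtain ⟨hαS, hα⟩ := mem_powersetCard.1 hα
        rw [sum_const, card_filter_powersetCard_subset α S k hαS (hα ▸ hpk), hα]
    _ = (#S - p).choose (k - p) • ∑ α ∈ S.powersetCard p, g α := smul_sum.symm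

lemma sum_powersetCard_eq_of_card_eq [AddCommMonoid R] [IsAddTorsionFree R] (g : Finset ι → R)
    {p k : ℕ} (hpk : p ≤ k)
    (hg : ∀ K K' : Finset ι, #K = k → #K' = k →
      ∑ α ∈ K.powersetCard p, g α = ∑ α ∈ K'.powersetCard p, g α)
    {S S' : Finset ι} (hS : k ≤ #S) (hSS' : #S = #S') :
    ∑ α ∈ S.powersetCard p, g α = ∑ α ∈ S'.powersetCard p, g α := by
  obtain ⟨K₀, -, hK₀⟩ := exists_subset_card_eq hS
  have hdouble : ∀ T : Finset ι, #T = #S →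
      (#S - p).choose (k - p) • ∑ α ∈ T.powersetCard p, g α =
        (#S).choose k • ∑ α ∈ K₀.powersetCard p, g α := by
    intro T hT
    rw [← hT, ← sum_powersetCard_sum_powersetCard_s7 g hpk, ← card_powersetCard, ← sum_const]
    exact sum_congr rfl fun K hK => hg K K₀ (mem_powersetCard.1 hK).2 hK₀
  exact nsmul_right_injective (Nat.choose_pos (Nat.sub_le_sub_right hS p)).ne'
    ((hdouble S rfl).trans (hdouble S' hSS'.symm).symm)

lemma sum_filter_superset_eq_sum_powerset [Fintype ι] [CommRing R] (g : Finset ι → R) (p : ℕ)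
    (β : Finset ι) :
    ∑ α ∈ univ.powersetCard p with β ⊆ α, g α =
      ∑ δ ∈ β.powerset, (-1) ^ #δ * ∑ α ∈ δᶜ.powersetCard p, g α := by
  calc ∑ α ∈ univ.powersetCard p with β ⊆ α, g α
      = ∑ α ∈ univ.powersetCard p, ∑ δ ∈ (β \ α).powerset, (-1) ^ #δ * g α := by
        rw [sum_filter]
        refine sum_congr rfl fun α _ => ?_
        have hsign : ∑ δ ∈ (β \ α).powerset, (-1 : R) ^ #δ = if β \ α = ∅ then 1 else 0 := by
          exact_mod_cast congrArg (Int.cast : ℤ → R) sum_powerset_neg_one_pow_card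
        rw [← sum_mul, hsign]
        simp only [sdiff_eq_empty_iff_subset, ite_mul, one_mul, zero_mul]
    _ = ∑ δ ∈ β.powerset, ∑ α ∈ δᶜ.powersetCard p, (-1) ^ #δ * g α := by
        refine sum_comm' fun α δ => ?_
        simp only [mem_powersetCard, mem_powerset, subset_sdiff, subset_compl_iff_disjoint_right,
          subset_univ, true_and]
        exact ⟨fun ⟨hα, hδβ, hδα⟩ => ⟨⟨hδα.symm, hα⟩, hδβ⟩,
          fun ⟨⟨hαδ, hα⟩, hδβ⟩ => ⟨hα, hδβ, hαδ.symm⟩⟩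
    _ = ∑ δ ∈ β.powerset, (-1) ^ #δ * ∑ α ∈ δᶜ.powersetCard p, g α := by
        simp only [mul_sum]

end Finset

lemma principalDet_submatrix {m n : ℕ} (M : Matrix (Fin n) (Fin n) ℂ) (f : Fin m ↪ Fin n)
    (s : Finset (Fin m)) :
    principalDet (M.submatrix f f) s = principalDet M (s.map f) := by
  rw [principalDet, principalDet, submatrix_submatrix,
    ← det_submatrix_equiv_self (s.equivMap f)]
  rfl

lemma sum_powersetCard_principalDet_submatrix {m n : ℕ} (M : Matrix (Fin n) (Fin n) ℂ)
    (f : Fin m ↪ Fin n) (p : ℕ) :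
    ∑ s ∈ univ.powersetCard p, principalDet (M.submatrix f f) s =
      ∑ α ∈ (univ.map f).powersetCard p, principalDet M α := by
  simp only [powersetCard_map, sum_map, principalDet_submatrix]
  rfl

lemma charpoly_coeff_eq_sum_principalDet {m : ℕ} (A : Matrix (Fin m) (Fin m) ℂ) {p : ℕ}
    (hp : p ≤ m) :
    A.charpoly.coeff (m - p) = (-1) ^ p * ∑ s ∈ univ.powersetCard p, principalDet A s := by
  have h := A.charpoly_coeff_eq_sum_minors p ((Fintype.card_fin m).symm ▸ hp)
  rwa [Fintype.card_fin] at h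

lemma SpecMono.sum_powersetCard_principalDet_eq {n k p : ℕ} {M : Matrix (Fin n) (Fin n) ℂ}
    (hM : SpecMono k M) (hp : p ≤ k) {K K' : Finset (Fin n)} (hK : #K = k) (hK' : #K' = k) :
    ∑ α ∈ K.powersetCard p, principalDet M α = ∑ α ∈ K'.powersetCard p, principalDet M α := by
  let f := (K.orderEmbOfFin hK).toEmbedding
  let f' := (K'.orderEmbOfFin hK').toEmbedding
  have hcoeff := congrArg (coeff · (k - p)) (hM f f' f.injective f'.injective)
  simp only [charpoly_coeff_eq_sum_principalDet _ hp, sum_powersetCard_principalDet_submatrix,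
    f, f', map_orderEmbOfFin_univ] at hcoeff
  exact mul_left_cancel₀ (pow_ne_zero p (neg_ne_zero.2 one_ne_zero)) hcoeff

theorem stmt_7_general (n k p : ℕ) (hkn : k ≤ n - 1) (hp : p ≤ k)
    (M : Matrix (Fin n) (Fin n) ℂ) (hM : SpecMono k M)
    (β β' : Finset (Fin n)) (hβ : β.card ≤ n - k)
    (hcard : β.card = β'.card) :
    ∑ α ∈ (Finset.univ.powersetCard p).filter (fun α => β ⊆ α), principalDet M α =
      ∑ α ∈ (Finset.univ.powersetCard p).filter (fun α => β' ⊆ α), principalDet M α := by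
  have hminors : ∀ S S' : Finset (Fin n), k ≤ #S → #S = #S' →
      ∑ α ∈ S.powersetCard p, principalDet M α = ∑ α ∈ S'.powersetCard p, principalDet M α :=
    fun _ _ => sum_powersetCard_eq_of_card_eq _ hp fun _ _ => hM.sum_powersetCard_principalDet_eq hp
  rw [sum_filter_superset_eq_sum_powerset, sum_filter_superset_eq_sum_powerset]
  refine sum_powerset_eq_of_card_eq _ (fun δ δ' hδδ' hδ => ?_) hβ hcard
  rw [hδδ', hminors δᶜ δ'ᶜ (by rw [card_compl, Fintype.card_fin]; omega)
    (by rw [card_compl, card_compl, hδδ'])]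

theorem stmt_7 (n k p : ℕ) (hk3 : 3 ≤ k) (hkn : k ≤ n - 1) (hp : p ≤ k)
    (M : Matrix (Fin n) (Fin n) ℂ) (hM : SpecMono k M)
    (β β' : Finset (Fin n)) (hβ : β.card ≤ n - k) (hβ' : β'.card ≤ n - k)
    (hcard : β.card = β'.card) :
    ∑ α ∈ (Finset.univ.powersetCard p).filter (fun α => β ⊆ α), principalDet M α =
      ∑ α ∈ (Finset.univ.powersetCard p).filter (fun α => β' ⊆ α), principalDet M α :=
  stmt_7_general n k p hkn hp M hM β β' hβ hcard
end
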